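/- The standard normal CDF Φ is log-concave on ℝ, i.e., x ↦ log Φ(x) is concave. -/

import Mathlib

/-!
Write `g t = exp (-t²/2)` and `F x = ∫_{t ≤ x} g t`, so `F' = g` and `F'' = -x g`. For a positive
`F`, `(log F)'' = (F'' F - F'²) / F²`, so log-concavity reduces to `-x F x ≤ g x`. This holds
because `-x ≤ -t` for `t ≤ x` and `∫_{t ≤ x} -t g t = g x`, `-t g t` being the derivative of `g`.
-/

open MeasureTheory Set Real Filter

noncomputable def gaussKernel (t : ℝ) : ℝ := exp (-t ^ 2 / 2)

lemma gaussKernel_pos (t : ℝ) : 0 < gaussKernel t := exp_pos _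

lemma continuous_gaussKernel : Continuous gaussKernel := by
  unfold gaussKernel; fun_prop

lemma gaussKernel_eq_exp_neg_mul_sq : gaussKernel = fun t => exp (-(1 / 2) * t ^ 2) := by
  ext t; rw [gaussKernel]; ring_nf

lemma integrable_gaussKernel : Integrable gaussKernel := by
  rw [gaussKernel_eq_exp_neg_mul_sq]; exact integrable_exp_neg_mul_sq (by norm_num)

lemma integrable_neg_mul_gaussKernel : Integrable fun t => -t * gaussKernel t := by
  simp_rw [neg_mul]
  rw [gaussKernel_eq_exp_neg_mul_sq]
  exact (integrable_mul_exp_neg_mul_sq (by norm_num)).neg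

lemma hasDerivAt_gaussKernel (t : ℝ) : HasDerivAt gaussKernel (-t * gaussKernel t) t := by
  have h : HasDerivAt (fun t : ℝ => -t ^ 2 / 2) (-t) t :=
    ((hasDerivAt_pow 2 t).neg.div_const 2).congr_deriv (by push_cast; ring)
  exact h.exp.congr_deriv (mul_comm _ _)

lemma tendsto_gaussKernel_atBot : Tendsto gaussKernel atBot (nhds 0) := by
  have := (tendsto_rpow_abs_mul_exp_neg_mul_sq_cocompact (a := 1 / 2) (by norm_num) 0).mono_left
    atBot_le_cocompact
  simpa only [rpow_zero, one_mul, ← gaussKernel_eq_exp_neg_mul_sq] using this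

noncomputable def gaussIntegralIic (x : ℝ) : ℝ := ∫ t in Iic x, gaussKernel t

lemma gaussIntegralIic_pos (x : ℝ) : 0 < gaussIntegralIic x :=
  have : NeZero (volume.restrict (Iic x)) := ⟨by simp⟩
  integral_exp_pos integrable_gaussKernel.integrableOn

lemma hasDerivAt_gaussIntegralIic (x : ℝ) : HasDerivAt gaussIntegralIic (gaussKernel x) x := by
  have h : gaussIntegralIic = fun y => gaussIntegralIic 0 + ∫ t in (0 : ℝ)..y, gaussKernel t := by
    ext y
    rw [gaussIntegralIic, gaussIntegralIic, ← intervalIntegral.integral_Iic_sub_Iic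
      integrable_gaussKernel.integrableOn integrable_gaussKernel.integrableOn, add_sub_cancel]
  rw [h]
  exact (continuous_gaussKernel.integral_hasStrictDerivAt 0 x).hasDerivAt.const_add _

lemma integral_Iic_neg_mul_gaussKernel (x : ℝ) :
    ∫ t in Iic x, -t * gaussKernel t = gaussKernel x := by
  rw [integral_Iic_of_hasDerivAt_of_tendsto' (fun t _ => hasDerivAt_gaussKernel t)
    integrable_neg_mul_gaussKernel.integrableOn tendsto_gaussKernel_atBot, sub_zero]

lemma neg_mul_gaussIntegralIic_le (x : ℝ) : -x * gaussIntegralIic x ≤ gaussKernel x := by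
  rw [gaussIntegralIic, ← integral_const_mul, ← integral_Iic_neg_mul_gaussKernel x]
  refine setIntegral_mono_on (integrable_gaussKernel.integrableOn.const_mul _)
    integrable_neg_mul_gaussKernel.integrableOn measurableSet_Iic fun t ht =>
    mul_le_mul_of_nonneg_right (neg_le_neg ht) (gaussKernel_pos t).le

theorem concaveOn_log_of_mul_deriv2_le_sq {F F' F'' : ℝ → ℝ}
    (hF : ∀ x, HasDerivAt F (F' x) x) (hF' : ∀ x, HasDerivAt F' (F'' x) x)
    (hpos : ∀ x, 0 < F x) (h : ∀ x, F'' x * F x ≤ F' x ^ 2) :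
    ConcaveOn ℝ univ fun x => log (F x) := by
  have hlog (x : ℝ) : HasDerivAt (fun x => log (F x)) (F' x / F x) x :=
    (hF x).log (hpos x).ne'
  have hlog' (x : ℝ) : HasDerivAt (fun x => F' x / F x)
      ((F'' x * F x - F' x * F' x) / F x ^ 2) x :=
    (hF' x).div (hF x) (hpos x).ne'
  refine concaveOn_of_hasDerivWithinAt2_nonpos convex_univ
    (fun x _ => (hlog x).continuousAt.continuousWithinAt)
    (fun x _ => (hlog x).hasDerivWithinAt) (fun x _ => (hlog' x).hasDerivWithinAt)
    fun x _ => div_nonpos_of_nonpos_of_nonneg ?_ (sq_nonneg _)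
  linarith [h x, sq (F' x)]

theorem concaveOn_log_gaussIntegralIic : ConcaveOn ℝ univ fun x => log (gaussIntegralIic x) :=
  concaveOn_log_of_mul_deriv2_le_sq hasDerivAt_gaussIntegralIic hasDerivAt_gaussKernel
    gaussIntegralIic_pos fun x => by
      have := mul_le_mul_of_nonneg_left (neg_mul_gaussIntegralIic_le x) (gaussKernel_pos x).le
      linarith

/-- The standard normal CDF `Φ` is log-concave on `ℝ`: `x ↦ log Φ(x)` is concave. -/
theorem stmt_2 (Φ : ℝ → ℝ)
    (hΦ : ∀ x, Φ x = (1 / Real.sqrt (2 * Real.pi)) * ∫ t in Set.Iic x, Real.exp (-t ^ 2 / 2)) :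
    ConcaveOn ℝ Set.univ (fun x => Real.log (Φ x)) := by
  have hc : 0 < 1 / √(2 * π) := by positivity
  have hlog : (fun x => log (Φ x)) = fun x => log (1 / √(2 * π)) + log (gaussIntegralIic x) := by
    ext x
    rw [hΦ]
    exact log_mul hc.ne' (gaussIntegralIic_pos x).ne'
  rw [hlog]
  exact (concaveOn_const _ convex_univ).add concaveOn_log_gaussIntegralIic
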